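/- arXiv:1804.01258 — 2 statements merged into one kernel-verified Lean document; each statement's English description precedes it below -/
import Mathlib

section
/- Fix integers k ≥ 1 and κ, m, n with k ≤ κ < m and 2m+1 ≤ n ≤ 3m−κ. Let G₁ = K_{n−2m} + \overline{K}_κ + \overline{K}_m + \overline{K}_{m−κ}. Then the vertex connectivity of G₁ equals κ. -/
/-!
Removing fewer than `κ` vertices leaves a vertex `b` in the part `K̄_κ` and a vertex `c` in the
part `K̄_m`; they are adjacent and every other remaining vertex is adjacent to one of them, so the
rest is connected. Conversely, removing the `κ` vertices of `K̄_κ` cuts the clique `K_{n-2m}` off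
from `K̄_{m-κ}`, and both are nonempty since `n > 2m` and `m > κ`.
-/

open SimpleGraph

/-- A set of vertices is independent if no two of its vertices are adjacent. -/
def SimpleGraph.IsIndepSet' {V : Type*} (G : SimpleGraph V) (s : Set V) : Prop :=
  s.Pairwise fun u v => ¬ G.Adj u v

/-- The independence number `α(G)`: the maximum size of an independent set. -/
noncomputable def SimpleGraph.indepNum' {V : Type*} (G : SimpleGraph V) [Fintype V] : ℕ :=
  sSup {n | ∃ s : Finset V, G.IsIndepSet' ↑s ∧ s.card = n}

/-- `G` is `k`-connected: `G` has more than `k` vertices and deleting any set of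
fewer than `k` vertices leaves a connected graph. -/
def SimpleGraph.IsKConnected {V : Type*} (G : SimpleGraph V) [Fintype V] (k : ℕ) : Prop :=
  k < Fintype.card V ∧ ∀ s : Set V, s.ncard < k → (G.induce sᶜ).Connected

/-- The connectivity `κ(G)`: the largest `k` such that `G` is `k`-connected. -/
noncomputable def SimpleGraph.connectivity' {V : Type*} (G : SimpleGraph V) [Fintype V] : ℕ :=
  sSup {k | G.IsKConnected k}

/-- `σ_k(G)`: the minimum degree sum over independent sets of size `k`
(`⊤` if there is no such set). -/
noncomputable def SimpleGraph.sigmaDeg {V : Type*} (G : SimpleGraph V) [Fintype V]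
    (k : ℕ) : ℕ∞ := by
  classical
  exact ⨅ s ∈ {s : Finset V | G.IsIndepSet' ↑s ∧ s.card = k}, (∑ x ∈ s, G.degree x : ℕ∞)

/-- A "blowup" graph: vertices are grouped in parts indexed by `ι`, where part `i` has
`sizes i` vertices, part `i` induces a complete graph if `compl i` holds (an edgeless graph
otherwise), and two parts `i`, `j` are completely joined iff `rel i j ∨ rel j i`. -/
def blowup {ι : Type} (sizes : ι → ℕ) (compl : ι → Prop) (rel : ι → ι → Prop) :
    SimpleGraph (Σ i, Fin (sizes i)) where
  Adj x y := (x.1 = y.1 ∧ compl x.1 ∧ x ≠ y) ∨ (x.1 ≠ y.1 ∧ (rel x.1 y.1 ∨ rel y.1 x.1))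
  symm := by
    constructor
    rintro x y (⟨h1, h2, h3⟩ | ⟨h1, h2⟩)
    · exact Or.inl ⟨h1.symm, h1 ▸ h2, h3.symm⟩
    · exact Or.inr ⟨h1.symm, h2.symm⟩
  loopless := by constructor; rintro x (⟨_, _, h⟩ | ⟨h, _⟩) <;> exact h rfl

/-- The graph `G₁ = K_{n-2m} + K̄_κ + K̄_m + K̄_{m-κ}` (sequential join). -/
def GraphG1 (n m κ : ℕ) : SimpleGraph (Σ i : Fin 4, Fin (![n - 2 * m, κ, m, m - κ] i)) :=
  blowup ![n - 2 * m, κ, m, m - κ] (fun i => i = 0) (fun i j => (i : ℕ) + 1 = (j : ℕ))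

namespace SimpleGraph

variable {V : Type*}

theorem connectivity'_eq_of_isKConnected [Fintype V] {G : SimpleGraph V} {k : ℕ}
    (hk : G.IsKConnected k) {s : Set V} (hs : s.ncard ≤ k) (hdis : ¬ (G.induce sᶜ).Connected) :
    G.connectivity' = k := by
  have hle : ∀ k' ∈ {k' | G.IsKConnected k'}, k' ≤ k := fun k' hk' =>
    not_lt.1 fun hlt => hdis (hk'.2 s (hs.trans_lt hlt))
  exact le_antisymm (csSup_le ⟨k, hk⟩ hle) (le_csSup ⟨k, hle⟩ hk)

theorem connected_of_forall_adj_or_adj {H : SimpleGraph V} {b c : V} (hbc : H.Adj b c)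
    (h : ∀ v, H.Adj v b ∨ H.Adj v c) : H.Connected := by
  have hb : ∀ v, H.Reachable v b := fun v =>
    (h v).elim Adj.reachable fun hvc => hvc.reachable.trans hbc.symm.reachable
  exact (connected_iff H).2 ⟨fun u v => (hb u).trans (hb v).symm, ⟨b⟩⟩

theorem not_connected_of_forall_adj_mem {H : SimpleGraph V} (A : Set V) {a d : V} (ha : a ∈ A)
    (hd : d ∉ A) (hA : ∀ u v, H.Adj u v → u ∈ A → v ∈ A) : ¬ H.Connected := fun hc => by
  obtain ⟨p⟩ := hc.preconnected a d
  obtain ⟨e, -, he₁, he₂⟩ := p.exists_boundary_dart A ha hd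
  exact he₂ (hA _ _ e.adj he₁)

end SimpleGraph

section Blowup

variable {ι : Type} {sizes : ι → ℕ}

theorem ncard_setOf_fst_eq (i : ι) : {v : Σ j, Fin (sizes j) | v.1 = i}.ncard = sizes i := by
  have hrange : {v : Σ j, Fin (sizes j) | v.1 = i} = Set.range (Sigma.mk i) := by
    ext ⟨j, x⟩
    constructor
    · rintro rfl; exact ⟨x, rfl⟩
    · rintro ⟨y, h⟩; exact (congrArg Sigma.fst h).symm
  rw [hrange, Set.ncard_range_of_injective sigma_mk_injective, Nat.card_eq_fintype_card,
    Fintype.card_fin]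

theorem exists_sigmaMk_notMem [Finite ι] {s : Set (Σ j, Fin (sizes j))} {i : ι}
    (hs : s.ncard < sizes i) : ∃ y, (⟨i, y⟩ : Σ j, Fin (sizes j)) ∉ s := by
  obtain ⟨⟨j, y⟩, rfl, hy⟩ :=
    Set.exists_mem_notMem_of_ncard_lt_ncard (hs.trans_eq (ncard_setOf_fst_eq i).symm)
  exact ⟨y, hy⟩

theorem blowup_adj_of_rel {compl : ι → Prop} {rel : ι → ι → Prop} {x y : Σ i, Fin (sizes i)}
    (hne : x.1 ≠ y.1) (h : rel x.1 y.1) : (blowup sizes compl rel).Adj x y :=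
  Or.inr ⟨hne, Or.inl h⟩

end Blowup

section GraphG1

variable {n m κ : ℕ}

theorem graphG1_adj_of_succ {x y : Σ i : Fin 4, Fin (![n - 2 * m, κ, m, m - κ] i)}
    (h : (x.1 : ℕ) + 1 = y.1) : (GraphG1 n m κ).Adj x y :=
  blowup_adj_of_rel (fun hxy => by rw [hxy] at h; omega) h

theorem graphG1_fst_eq_zero_of_adj {x y : Σ i : Fin 4, Fin (![n - 2 * m, κ, m, m - κ] i)}
    (hxy : (GraphG1 n m κ).Adj x y) (hx : x.1 = 0) (hy : y.1 ≠ 1) : y.1 = 0 := by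
  rcases hxy with ⟨h, -, -⟩ | ⟨-, h | h⟩
  · exact hx ▸ h.symm
  · exact absurd (Fin.ext (by rw [← h, hx]; rfl)) hy
  · rw [hx] at h; exact absurd h (by simp)

theorem graphG1_induce_compl_connected (hκm : κ < m)
    {s : Set (Σ i : Fin 4, Fin (![n - 2 * m, κ, m, m - κ] i))} (hs : s.ncard < κ) :
    ((GraphG1 n m κ).induce sᶜ).Connected := by
  obtain ⟨y₁, hy₁⟩ := exists_sigmaMk_notMem (s := s) (i := 1) (by simpa using hs)
  obtain ⟨y₂, hy₂⟩ := exists_sigmaMk_notMem (s := s) (i := 2) (by simpa using hs.trans hκm)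
  refine connected_of_forall_adj_or_adj (b := ⟨_, hy₁⟩) (c := ⟨_, hy₂⟩)
    (graphG1_adj_of_succ (x := ⟨1, y₁⟩) (y := ⟨2, y₂⟩) rfl) ?_
  rintro ⟨⟨i, x⟩, -⟩
  fin_cases i
  · exact Or.inl (graphG1_adj_of_succ rfl)
  · exact Or.inr (graphG1_adj_of_succ rfl)
  · exact Or.inl (graphG1_adj_of_succ rfl).symm
  · exact Or.inr (graphG1_adj_of_succ rfl).symm

theorem graphG1_induce_compl_part_one_not_connected (hκm : κ < m) (hn : 2 * m + 1 ≤ n) :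
    ¬ ((GraphG1 n m κ).induce
      {v : Σ i : Fin 4, Fin (![n - 2 * m, κ, m, m - κ] i) | v.1 = 1}ᶜ).Connected := by
  have h₀ : 0 < n - 2 * m := by omega
  have h₃ : 0 < m - κ := by omega
  refine not_connected_of_forall_adj_mem {v | v.1.1 = 0}
    (a := ⟨⟨0, ⟨0, h₀⟩⟩, by simp⟩) (d := ⟨⟨3, ⟨0, h₃⟩⟩, by simp⟩) rfl (by simp) ?_
  exact fun u v huv hu => graphG1_fst_eq_zero_of_adj huv hu v.2

theorem graphG1_isKConnected (hκm : κ < m) :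
    (GraphG1 n m κ).IsKConnected κ := by
  refine ⟨?_, fun s hs => graphG1_induce_compl_connected hκm hs⟩
  rw [Fintype.card_sigma, Fin.sum_univ_four]
  simp only [Fintype.card_fin]
  change κ < (n - 2 * m) + κ + m + (m - κ)
  omega

end GraphG1

theorem stmt_10_general (κ m n : ℕ) (hκm : κ < m)
    (hn1 : 2 * m + 1 ≤ n) :
    (GraphG1 n m κ).connectivity' = κ :=
  connectivity'_eq_of_isKConnected (graphG1_isKConnected hκm)
    (ncard_setOf_fst_eq (sizes := ![n - 2 * m, κ, m, m - κ]) 1).le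
    (graphG1_induce_compl_part_one_not_connected hκm hn1)

/-- For `G₁ = K_{n-2m} + K̄_κ + K̄_m + K̄_{m-κ}` (with `k ≤ κ < m` and
`2m+1 ≤ n ≤ 3m-κ`), the vertex connectivity is `κ`. -/
theorem stmt_10 (k κ m n : ℕ) (hk : 1 ≤ k) (hkκ : k ≤ κ) (hκm : κ < m)
    (hn1 : 2 * m + 1 ≤ n) (hn2 : n ≤ 3 * m - κ) :
    (GraphG1 n m κ).connectivity' = κ :=
  stmt_10_general κ m n hκm hn1
end

section
/- Let κ, r, k, m be integers with r ≥ 4, 3 ≤ k ≤ κ−2, and m = (k+1)(r−2)+4. Let G₂ = K₁ + \overline{K}_κ + K_{κ+m−r} + (\overline{K}_m + K_r). Then σ_{k+1}(G₂) = n(G₂) + κ(G₂) + (k−2)(α(G₂)−1), where n(G₂) = 2κ+2m+1, κ(G₂) = κ, α(G₂) = κ+m. In particular, σ_{k+1}(G₂) = min{κ + k(κ+m), (k+1)(κ+m−r+1)} = κ + k(κ+m) − (k−3). -/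
open SimpleGraph

/-- The graph `G₂ = K₁ + K̄_κ + K_{κ+m-r} + (K̄_m + K_r)`: five parts where parts
`0, 2, 4` are complete, parts `1, 3` are edgeless, and the joined pairs of parts are
`(0,1), (1,2), (2,3), (2,4), (3,4)`. -/
def GraphG2 (κ m r : ℕ) : SimpleGraph (Σ i : Fin 5, Fin (![1, κ, κ + m - r, m, r] i)) :=
  blowup ![1, κ, κ + m - r, m, r] (fun i => i = 0 ∨ i = 2 ∨ i = 4)
    (fun i j => (i = 0 ∧ j = 1) ∨ (i = 1 ∧ j = 2) ∨ (i = 2 ∧ j = 3) ∨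
      (i = 2 ∧ j = 4) ∨ (i = 3 ∧ j = 4))



open Finset


abbrev G2R (i j : Fin 5) : Prop := (i = 0 ∧ j = 1) ∨ (i = 1 ∧ j = 2) ∨ (i = 2 ∧ j = 3) ∨
      (i = 2 ∧ j = 4) ∨ (i = 3 ∧ j = 4)

lemma G2_adj_iff (κ m r : ℕ) (x y : Σ i : Fin 5, Fin (![1, κ, κ + m - r, m, r] i)) :
    (GraphG2 κ m r).Adj x y ↔
      (x.1 = y.1 ∧ (x.1 = 0 ∨ x.1 = 2 ∨ x.1 = 4) ∧ x ≠ y) ∨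
      (x.1 ≠ y.1 ∧ (G2R x.1 y.1 ∨ G2R y.1 x.1)) := Iff.rfl

instance (κ m r : ℕ) : DecidableRel (GraphG2 κ m r).Adj := fun x y =>
  decidable_of_iff _ (G2_adj_iff κ m r x y).symm

lemma filter_sigma_card {n : Fin 5 → ℕ} (p : (Σ i, Fin (n i)) → Prop) [DecidablePred p] :
    (univ.filter p).card = ∑ i : Fin 5, (univ.filter fun a : Fin (n i) => p ⟨i, a⟩).card := by
  rw [← Finset.card_sigma]
  congr 1
  ext ⟨i, a⟩
  simp

lemma deg_gen (κ m r : ℕ) (x : Σ i : Fin 5, Fin (![1, κ, κ + m - r, m, r] i))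
    {inst : Fintype ((GraphG2 κ m r).neighborSet x)} :
    @SimpleGraph.degree _ (GraphG2 κ m r) x inst =
      ∑ i : Fin 5, (univ.filter fun b : Fin (![1, κ, κ + m - r, m, r] i) =>
        (GraphG2 κ m r).Adj x ⟨i, b⟩).card := by
  have : inst = (GraphG2 κ m r).neighborSetFintype x := Subsingleton.elim _ _
  subst this
  rw [← SimpleGraph.card_neighborFinset_eq_degree, SimpleGraph.neighborFinset_eq_filter,
    filter_sigma_card]

lemma card_filter_sigma_ne {n : Fin 5 → ℕ} (i : Fin 5) (a : Fin (n i)) :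
    #(univ.filter fun x : Fin (n i) => ¬ (⟨i, a⟩ : Σ j, Fin (n j)) = ⟨i, x⟩) = n i - 1 := by
  rw [show (univ.filter fun x : Fin (n i) => ¬ (⟨i, a⟩ : Σ j, Fin (n j)) = ⟨i, x⟩) = univ.erase a by
    ext x; simp [eq_comm]]
  simp

lemma deg0 (κ m r : ℕ) (a : Fin 1)
    {inst : Fintype ((GraphG2 κ m r).neighborSet ⟨0, a⟩)} :
    @SimpleGraph.degree _ (GraphG2 κ m r) ⟨0, a⟩ inst = κ := by
  rw [deg_gen, Fin.sum_univ_five]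
  simp +decide [G2_adj_iff]
  erw [Finset.card_fin, card_filter_sigma_ne]
  change (1 - 1) + κ + 0 + 0 + 0 = _
  omega

lemma deg1 (κ m r : ℕ) (a : Fin κ)
    {inst : Fintype ((GraphG2 κ m r).neighborSet ⟨1, a⟩)} :
    @SimpleGraph.degree _ (GraphG2 κ m r) ⟨1, a⟩ inst = 1 + (κ + m - r) := by
  rw [deg_gen, Fin.sum_univ_five]
  simp +decide [G2_adj_iff]
  erw [Finset.card_fin, Finset.card_fin]
  change 1 + 0 + (κ + m - r) + 0 + 0 = _
  omega

lemma deg2 (κ m r : ℕ) (a : Fin (κ + m - r))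
    {inst : Fintype ((GraphG2 κ m r).neighborSet ⟨2, a⟩)} :
    @SimpleGraph.degree _ (GraphG2 κ m r) ⟨2, a⟩ inst = κ + (κ + m - r - 1) + (m + r) := by
  rw [deg_gen, Fin.sum_univ_five]
  simp +decide [G2_adj_iff, Finset.filter_ne, Finset.card_erase_of_mem]
  erw [Finset.card_fin, Finset.card_fin, Finset.card_fin, card_filter_sigma_ne]
  change 0 + κ + (κ + m - r - 1) + m + r = _
  omega

lemma deg3 (κ m r : ℕ) (a : Fin m)
    {inst : Fintype ((GraphG2 κ m r).neighborSet ⟨3, a⟩)} :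
    @SimpleGraph.degree _ (GraphG2 κ m r) ⟨3, a⟩ inst = (κ + m - r) + r := by
  rw [deg_gen, Fin.sum_univ_five]
  simp +decide [G2_adj_iff]
  erw [Finset.card_fin, Finset.card_fin]
  change 0 + 0 + (κ + m - r) + 0 + r = _
  omega

lemma deg4 (κ m r : ℕ) (a : Fin r)
    {inst : Fintype ((GraphG2 κ m r).neighborSet ⟨4, a⟩)} :
    @SimpleGraph.degree _ (GraphG2 κ m r) ⟨4, a⟩ inst = (κ + m - r) + m + (r - 1) := by
  rw [deg_gen, Fin.sum_univ_five]
  simp +decide [G2_adj_iff, Finset.filter_ne, Finset.card_erase_of_mem]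
  erw [Finset.card_fin, Finset.card_fin, card_filter_sigma_ne]
  change 0 + 0 + (κ + m - r) + m + (r - 1) = _
  omega

lemma adj_cross (κ m r : ℕ) {i j : Fin 5} (h : ¬ i = j) (hrel : G2R i j ∨ G2R j i)
    (a : Fin (![1, κ, κ + m - r, m, r] i)) (b : Fin (![1, κ, κ + m - r, m, r] j)) :
    (GraphG2 κ m r).Adj ⟨i, a⟩ ⟨j, b⟩ := Or.inr ⟨h, hrel⟩

lemma adj_same (κ m r : ℕ) {i : Fin 5} (h : i = 0 ∨ i = 2 ∨ i = 4)
    (a b : Fin (![1, κ, κ + m - r, m, r] i))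
    (hne : ¬ (⟨i, a⟩ : Σ i : Fin 5, Fin (![1, κ, κ + m - r, m, r] i)) = ⟨i, b⟩) :
    (GraphG2 κ m r).Adj ⟨i, a⟩ ⟨i, b⟩ := Or.inl ⟨rfl, h, hne⟩

lemma not_adj_11 (κ m r : ℕ) (a b : Fin κ) : ¬ (GraphG2 κ m r).Adj ⟨1, a⟩ ⟨1, b⟩ := by
  rintro (⟨-, h, -⟩ | ⟨h, -⟩)
  · exact (by decide : ¬((1 : Fin 5) = 0 ∨ (1 : Fin 5) = 2 ∨ (1 : Fin 5) = 4)) h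
  · exact h rfl

/-- For `G₂ = K₁ + K̄_κ + K_{κ+m-r} + (K̄_m + K_r)` (with `r ≥ 4`, `3 ≤ k ≤ κ-2`,
`m = (k+1)(r-2)+4`), one has
`σ_{k+1}(G₂) = n(G₂) + κ(G₂) + (k-2)(α(G₂)-1)` where `n(G₂) = 2κ+2m+1`, `κ(G₂) = κ`,
`α(G₂) = κ+m`; moreover `σ_{k+1}(G₂) = min {κ + k(κ+m), (k+1)(κ+m-r+1)}
= κ + k(κ+m) - (k-3)`. -/
theorem stmt_15 (κ r k m : ℕ) (hr : 4 ≤ r) (hk3 : 3 ≤ k) (hkκ : k ≤ κ - 2)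
    (hm : m = (k + 1) * (r - 2) + 4) :
    (GraphG2 κ m r).sigmaDeg (k + 1) =
      ((2 * κ + 2 * m + 1) + κ + (k - 2) * (κ + m - 1) : ℕ) ∧
    (GraphG2 κ m r).sigmaDeg (k + 1) =
      (min (κ + k * (κ + m)) ((k + 1) * (κ + m - r + 1)) : ℕ) ∧
    (GraphG2 κ m r).sigmaDeg (k + 1) = (κ + k * (κ + m) - (k - 3) : ℕ) := by
  have hκ : k + 2 ≤ κ := by omega
  have hrm : r ≤ m := by
    have h4 : 4 * (r - 2) ≤ (k + 1) * (r - 2) := Nat.mul_le_mul_right _ (by omega)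
    omega
  have hid : κ + k * (κ + m) = (k + 1) * (κ + m - r + 1) + (k - 3) := by
    subst hm
    zify [show 2 ≤ r by omega, show 3 ≤ k by omega,
      show r ≤ κ + ((k + 1) * (r - 2) + 4) by omega]
    ring
  have hid2 : (2 * κ + 2 * m + 1) + κ + (k - 2) * (κ + m - 1) = (k + 1) * (κ + m - r + 1) := by
    subst hm
    zify [show 2 ≤ r by omega, show 2 ≤ k by omega,
      show r ≤ κ + ((k + 1) * (r - 2) + 4) by omega,
      show 1 ≤ κ + ((k + 1) * (r - 2) + 4) by omega]
    ring
  have key : (GraphG2 κ m r).sigmaDeg (k + 1) = ((k + 1) * (κ + m - r + 1) : ℕ) := by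
    simp only [SimpleGraph.sigmaDeg]
    apply le_antisymm
    · -- upper bound
      have hle : k + 1 ≤ κ := by omega
      have hinj : Function.Injective
          (fun j : Fin (k+1) => (⟨1, Fin.castLE hle j⟩ : Σ i : Fin 5, Fin (![1, κ, κ + m - r, m, r] i))) := by
        intro a b hab
        injection hab with h1 h2
        exact Fin.castLE_injective hle h2
      set s₀ : Finset (Σ i : Fin 5, Fin (![1, κ, κ + m - r, m, r] i)) :=
        Finset.univ.map ⟨_, hinj⟩ with hs₀
      have hmem : s₀ ∈ {s : Finset (Σ i : Fin 5, Fin (![1, κ, κ + m - r, m, r] i)) |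
          (GraphG2 κ m r).IsIndepSet' ↑s ∧ s.card = k + 1} := by
        constructor
        · rintro u hu v hv huv
          simp only [hs₀, Finset.coe_map, Set.mem_image, Finset.mem_coe] at hu hv
          obtain ⟨ju, -, rfl⟩ := hu
          obtain ⟨jv, -, rfl⟩ := hv
          exact not_adj_11 κ m r (Fin.castLE hle ju) (Fin.castLE hle jv)
        · simp [hs₀]
      refine le_trans (iInf₂_le s₀ hmem) (le_of_eq ?_)
      rw [hs₀, Finset.sum_map]
      simp only [Function.Embedding.coeFn_mk]
      trans ∑ _j : Fin (k + 1), ((1 + (κ + m - r) : ℕ) : ℕ∞)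
      · refine Finset.sum_congr rfl fun j _ => ?_
        exact congrArg (fun n : ℕ => (n : ℕ∞)) (deg1 κ m r (Fin.castLE hle j))
      rw [Finset.sum_const, Finset.card_univ, Fintype.card_fin, nsmul_eq_mul]
      norm_cast
      ring_nf
    · refine le_iInf₂ fun s hs => ?_
      obtain ⟨hind, hcard⟩ := hs
      rw [← Nat.cast_sum, Nat.cast_le]
      have hfive : ∀ i : Fin 5, i = 0 ∨ i = 1 ∨ i = 2 ∨ i = 3 ∨ i = 4 := by decide
      by_cases hz : ∀ y ∈ s, y.1 ≠ (0 : Fin 5)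
      · -- no part-0 vertex: every degree ≥ κ+m-r+1
        rw [show (k + 1) * (κ + m - r + 1) = s.card • (κ + m - r + 1) by
          rw [hcard, smul_eq_mul]]
        refine Finset.card_nsmul_le_sum s _ _ ?_
        intro y hy
        obtain ⟨i, b⟩ := y
        rcases hfive i with rfl | rfl | rfl | rfl | rfl
        · exact (hz ⟨0, b⟩ hy rfl).elim
        · rw [deg1 κ m r b]; omega
        · rw [deg2 κ m r b]; omega
        · rw [deg3 κ m r b]; omega
        · rw [deg4 κ m r b]; omega
      · -- a part-0 vertex is present
        push_neg at hz
        obtain ⟨x, hxs, hx0⟩ := hz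
        obtain ⟨i, a⟩ := x
        replace hx0 : i = 0 := hx0
        subst hx0
        have hne0 : ∀ y ∈ s, y ≠ (⟨0, a⟩ : Σ i : Fin 5, Fin (![1, κ, κ + m - r, m, r] i)) →
            y.1 = 2 ∨ y.1 = 3 ∨ y.1 = 4 := by
          intro y hys hyne
          have hnadj : ¬ (GraphG2 κ m r).Adj ⟨0, a⟩ y :=
            hind (Finset.mem_coe.2 hxs) (Finset.mem_coe.2 hys) (Ne.symm hyne)
          obtain ⟨j, b⟩ := y
          rcases hfive j with rfl | rfl | rfl | rfl | rfl
          · exact absurd (congrArg (Sigma.mk 0) (Subsingleton.elim (α := Fin 1) b a)) hyne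
          · exact absurd (adj_cross κ m r (by decide) (by decide) a b) hnadj
          · exact Or.inl rfl
          · exact Or.inr (Or.inl rfl)
          · exact Or.inr (Or.inr rfl)
        have h3 : ∀ y ∈ s.erase ⟨0, a⟩, y.1 = (3 : Fin 5) := by
          intro y hy
          have hys := Finset.mem_of_mem_erase hy
          have hyne := Finset.ne_of_mem_erase hy
          have h1 : 1 < (s.erase ⟨0, a⟩).card := by
            rw [Finset.card_erase_of_mem hxs, hcard]; omega
          obtain ⟨z, hz', hzy⟩ := Finset.exists_mem_ne h1 y
          have hzs := Finset.mem_of_mem_erase hz'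
          have hzne := Finset.ne_of_mem_erase hz'
          have hy234 := hne0 y hys hyne
          have hz234 := hne0 z hzs hzne
          by_contra hy3
          apply hind (Finset.mem_coe.2 hzs) (Finset.mem_coe.2 hys) hzy
          obtain ⟨jy, by'⟩ := y
          obtain ⟨jz, bz⟩ := z
          replace hy234 : jy = 2 ∨ jy = 3 ∨ jy = 4 := hy234
          replace hz234 : jz = 2 ∨ jz = 3 ∨ jz = 4 := hz234
          replace hy3 : ¬ jy = 3 := hy3
          rcases hz234 with rfl | rfl | rfl <;> rcases hy234 with rfl | rfl | rfl
          all_goals first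
            | exact absurd rfl hy3
            | exact adj_cross κ m r (by decide) (by decide) bz by'
            | exact adj_same κ m r (by decide) bz by' hzy
        rw [← Finset.insert_erase hxs, Finset.sum_insert (Finset.notMem_erase _ _), deg0 κ m r a]
        refine le_trans ?_ (Nat.add_le_add_left
          (Finset.card_nsmul_le_sum (s.erase ⟨0, a⟩) _ ((κ + m - r) + r) ?_) κ)
        · rw [Finset.card_erase_of_mem hxs, hcard, smul_eq_mul]
          have e : (κ + m - r) + r = κ + m := by omega
          rw [e, show k + 1 - 1 = k from rfl]
          exact le_of_le_of_eq (Nat.le_add_right _ _) hid.symm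
        · intro y hy
          have := h3 y hy
          obtain ⟨j, b⟩ := y
          replace this : j = 3 := this
          subst this
          rw [deg3 κ m r b]

  refine ⟨?_, ?_, ?_⟩ <;> rw [key]
  · norm_cast
    omega
  · norm_cast
    rw [min_eq_right (by omega)]
  · norm_cast
    omega
end
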